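/- arXiv:1801.06071 — 2 statements merged into one kernel-verified Lean document; each statement's English description precedes it below -/
import Mathlib

section
/- Let W be an I-graded formed space whose graded pieces carry δ-forms with signs δ_{w,i}, and suppose the sign is Γ-alternating, i.e., δ_{w,o(h)} · δ_{w,i(h)} = -1 for every arrow h. Then the induced transpose automorphism τ on the quiver variety M_ζ(v,w) is an involution: τ² = 1. In general (without the alternating hypothesis), τ⁴ = 1. -/
/-!
Let `σ_i` be the automorphism of `V_i` with `B(a, b) = B(b, σ_i a)`; it exists because the form
is nondegenerate. Taking adjoints twice conjugates by `σ`, so `τ²` is the gauge action of `σ`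
followed by the sign twist `(x, p, q) ↦ (-x, -δ p, -δ q)`, the signs coming from
`ε(h) ε(h̄) = -1` and from the `δ`-symmetry of the forms on `W`. The twist is an involution
commuting with the gauge action, so `τ⁴` is the gauge action of `σ²`. When `δ` is
`Γ`-alternating the twist is itself the action of the central element `(-δ_i)_i`, which scales
`x_h` by `δ_{i(h)} δ_{o(h)} = -1`; then `τ²` is the gauge action of `(-δ_i σ_i)_i`.
-/

noncomputable section

/-- Transport of an `I`-graded vector space along an equality of indices. -/
def vcast {I : Type*} (V : I → Type*) [∀ i, AddCommGroup (V i)] [∀ i, Module ℂ (V i)]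
    {i j : I} (h : i = j) : V i ≃ₗ[ℂ] V j := by
  subst h; exact LinearEquiv.refl ℂ (V i)

section Vcast

variable {I : Type*} (V : I → Type*) [∀ i, AddCommGroup (V i)] [∀ i, Module ℂ (V i)]

theorem vcast_symm_apply {i j : I} (e : i = j) (a : V j) :
    (vcast V e).symm a = vcast V e.symm a := by
  subst e; rfl

theorem vcast_vcast_apply {i j k : I} (e : i = j) (e' : j = k) (a : V i) :
    vcast V e' (vcast V e a) = vcast V (e.trans e') a := by
  subst e e'; rfl

theorem vcast_self_apply {i : I} (e : i = i) (a : V i) : vcast V e a = a := rfl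

theorem apply_vcast {H : Type*} {src tgt : H → I} (x : ∀ h, V (src h) →ₗ[ℂ] V (tgt h))
    {h h' : H} (e : h = h') (es : src h = src h') (et : tgt h = tgt h') (a : V (src h)) :
    x h' (vcast V es a) = vcast V et (x h a) := by
  subst e; rfl

theorem bilin_vcast_vcast (B : ∀ i, V i →ₗ[ℂ] V i →ₗ[ℂ] ℂ) {i j : I} (e : i = j) (a b : V i) :
    B j (vcast V e a) (vcast V e b) = B i a b := by
  subst e; rfl

end Vcast

theorem LinearMap.BilinForm.Nondegenerate.exists_linearEquiv_apply_eq_apply_swap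
    {K M : Type*} [Field K] [AddCommGroup M] [Module K M] [FiniteDimensional K M]
    {B : LinearMap.BilinForm K M} (hB : B.Nondegenerate) :
    ∃ σ : M ≃ₗ[K] M, ∀ a b, B a b = B b (σ a) := by
  refine ⟨(B.toDual hB).trans (B.flip.toDual hB.flip).symm, fun a b => ?_⟩
  have h := (B.flip.toDual hB.flip).apply_symm_apply (B.toDual hB a)
  exact (LinearMap.congr_fun h b).symm

theorem apply_eq_smul_of_adjoint_of_adjoint {R A B : Type*} [CommRing R]
    [AddCommGroup A] [Module R A] [AddCommGroup B] [Module R B]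
    {BA : LinearMap.BilinForm R A} {BB : LinearMap.BilinForm R B} (hBB : BB.SeparatingRight)
    {ρ : A → A} (hρ : ∀ a v, BA a v = BA (ρ v) a) {σ : B → B} (hσ : ∀ b u, BB b u = BB u (σ b))
    {c₁ c₂ : R} {f₀ f₂ : A → B} {g : B → A}
    (hg : ∀ a u, BA a (g u) = c₁ * BB (f₀ a) u) (hf : ∀ u v, BB u (f₂ v) = c₂ * BA (g u) v)
    (v : A) : f₂ v = (c₁ * c₂) • σ (f₀ (ρ v)) := by
  refine sub_eq_zero.mp (hBB _ fun u => ?_)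
  rw [map_sub, sub_eq_zero, hf, hρ, hg, hσ, map_smul, smul_eq_mul]
  ring

section Gauge

variable {K I H : Type*} [Field K] {src tgt : H → I} {V W : I → Type*}
  [∀ i, AddCommGroup (V i)] [∀ i, Module K (V i)] [∀ i, AddCommGroup (W i)] [∀ i, Module K (W i)]

def IsGaugeImage (g : ∀ i, V i ≃ₗ[K] V i)
    (x : ∀ h, V (src h) →ₗ[K] V (tgt h)) (p : ∀ i, W i →ₗ[K] V i) (q : ∀ i, V i →ₗ[K] W i)
    (x' : ∀ h, V (src h) →ₗ[K] V (tgt h)) (p' : ∀ i, W i →ₗ[K] V i) (q' : ∀ i, V i →ₗ[K] W i) :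
    Prop :=
  (∀ h, x' h = (g (tgt h)).toLinearMap ∘ₗ x h ∘ₗ (g (src h)).symm.toLinearMap)
    ∧ (∀ i, p' i = (g i).toLinearMap ∘ₗ p i)
    ∧ (∀ i, q' i = q i ∘ₗ (g i).symm.toLinearMap)

def IsSignedConj (σ : ∀ i, V i ≃ₗ[K] V i) (δ : I → K)
    (x : ∀ h, V (src h) →ₗ[K] V (tgt h)) (p : ∀ i, W i →ₗ[K] V i) (q : ∀ i, V i →ₗ[K] W i)
    (x' : ∀ h, V (src h) →ₗ[K] V (tgt h)) (p' : ∀ i, W i →ₗ[K] V i) (q' : ∀ i, V i →ₗ[K] W i) :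
    Prop :=
  (∀ h v, x' h v = -σ (tgt h) (x h ((σ (src h)).symm v)))
    ∧ (∀ i w, p' i w = (-δ i) • σ i (p i w))
    ∧ (∀ i v, q' i v = (-δ i) • q i ((σ i).symm v))

variable {σ : ∀ i, V i ≃ₗ[K] V i} {δ : I → K}
  {x x' x'' : ∀ h, V (src h) →ₗ[K] V (tgt h)} {p p' p'' : ∀ i, W i →ₗ[K] V i}
  {q q' q'' : ∀ i, V i →ₗ[K] W i}

theorem IsSignedConj.exists_isGaugeImage_of_alternating (hδ : ∀ i, δ i ^ 2 = 1)
    (halt : ∀ h, δ (src h) * δ (tgt h) = -1) (hc : IsSignedConj σ δ x p q x' p' q') :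
    ∃ g, IsGaugeImage g x p q x' p' q' := by
  have hsq : ∀ i, (-δ i) * (-δ i) = 1 := fun i => by linear_combination hδ i
  have hinv : ∀ i, (-δ i)⁻¹ = -δ i := fun i => inv_eq_of_mul_eq_one_right (hsq i)
  have hne : ∀ i, -δ i ≠ 0 := fun i => left_ne_zero_of_mul_eq_one (hsq i)
  refine ⟨fun i => (σ i).trans (LinearEquiv.smulOfNeZero K (V i) (-δ i) (hne i)),
    fun h => LinearMap.ext fun v => ?_, fun i => LinearMap.ext fun w => ?_,
    fun i => LinearMap.ext fun v => ?_⟩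
  · simp [hc.1, Units.smul_def, hinv, smul_smul, mul_comm (δ (tgt h)), halt h]
  · simp [hc.2.1]
  · simp [hc.2.2, Units.smul_def, hinv]

theorem IsSignedConj.isGaugeImage_trans (hδ : ∀ i, δ i ^ 2 = 1)
    (hc : IsSignedConj σ δ x p q x' p' q') (hc' : IsSignedConj σ δ x' p' q' x'' p'' q'') :
    IsGaugeImage (fun i => (σ i).trans (σ i)) x p q x'' p'' q'' := by
  have hsq : ∀ i, δ i * δ i = 1 := fun i => by linear_combination hδ i
  refine ⟨fun h => LinearMap.ext fun v => ?_, fun i => LinearMap.ext fun w => ?_,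
    fun i => LinearMap.ext fun v => ?_⟩
  · simp [hc.1, hc'.1]
  · simp [hc.2.1, hc'.2.1, smul_smul, hsq]
  · simp [hc.2.2, hc'.2.2, smul_smul, hsq]

end Gauge

section Transpose

variable {I H : Type*} {src tgt : H → I} {bar : H → H}
  (hsrc : ∀ h, src (bar h) = tgt h) (htgt : ∀ h, tgt (bar h) = src h) (ε : H → ℂ)
  {V W : I → Type*}
  [∀ i, AddCommGroup (V i)] [∀ i, Module ℂ (V i)] [∀ i, AddCommGroup (W i)] [∀ i, Module ℂ (W i)]
  (BV : ∀ i, V i →ₗ[ℂ] V i →ₗ[ℂ] ℂ) (BW : ∀ i, W i →ₗ[ℂ] W i →ₗ[ℂ] ℂ)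

/-- `(x', p', q') = τ (x, p, q)`, through the identities defining the adjoints; `vcast` reads
`x (bar h)` as a map `V (tgt h) → V (src h)`. -/
def IsTransposeImage
    (x : ∀ h, V (src h) →ₗ[ℂ] V (tgt h)) (p : ∀ i, W i →ₗ[ℂ] V i) (q : ∀ i, V i →ₗ[ℂ] W i)
    (x' : ∀ h, V (src h) →ₗ[ℂ] V (tgt h)) (p' : ∀ i, W i →ₗ[ℂ] V i) (q' : ∀ i, V i →ₗ[ℂ] W i) :
    Prop :=
  (∀ h u v, BV (tgt h) u (x' h v)
      = ε h * BV (src h) (vcast V (htgt h) (x (bar h) ((vcast V (hsrc h)).symm u))) v)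
    ∧ (∀ i v w, BW i (q i v) w = -BV i v (p' i w))
    ∧ (∀ i w v, BV i (p i w) v = BW i w (q' i v))

variable {hsrc htgt ε BV BW}
  {x x' x'' : ∀ h, V (src h) →ₗ[ℂ] V (tgt h)} {p p' p'' : ∀ i, W i →ₗ[ℂ] V i}
  {q q' q'' : ∀ i, V i →ₗ[ℂ] W i}

theorem IsTransposeImage.apply_bar (hbar : ∀ h, bar (bar h) = h) (hε : ∀ h, ε h + ε (bar h) = 0)
    (hτ : IsTransposeImage hsrc htgt ε BV BW x p q x' p' q') (h : H) (w : V (src h))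
    (u : V (tgt h)) :
    BV (src h) w (vcast V (htgt h) (x' (bar h) ((vcast V (hsrc h)).symm u)))
      = -ε h * BV (tgt h) (x h w) u := by
  have hx : vcast V (hsrc h) (vcast V (htgt (bar h))
      (x (bar (bar h)) ((vcast V (hsrc (bar h))).symm ((vcast V (htgt h)).symm w)))) = x h w := by
    simp only [vcast_symm_apply, vcast_vcast_apply]
    rw [apply_vcast V x (hbar h).symm _ (congrArg tgt (hbar h).symm), vcast_vcast_apply,
      vcast_self_apply]
  set v := (vcast V (hsrc h)).symm u
  calc BV (src h) w (vcast V (htgt h) (x' (bar h) v))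
      = BV (tgt (bar h)) ((vcast V (htgt h)).symm w) (x' (bar h) v) := by
        rw [← bilin_vcast_vcast V BV (htgt h), LinearEquiv.apply_symm_apply]
    _ = ε (bar h) * BV (src (bar h)) (vcast V (htgt (bar h))
          (x (bar (bar h)) ((vcast V (hsrc (bar h))).symm ((vcast V (htgt h)).symm w)))) v :=
        hτ.1 _ _ _
    _ = -ε h * BV (tgt h) (x h w) u := by
        rw [← bilin_vcast_vcast V BV (hsrc h), LinearEquiv.apply_symm_apply, hx,
          show ε (bar h) = -ε h by linear_combination hε h]

theorem IsTransposeImage.isSignedConj (hbar : ∀ h, bar (bar h) = h)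
    (hε : ∀ h, ε h + ε (bar h) = 0) (hε2 : ∀ h, ε h ^ 2 = 1)
    (hBV : ∀ i, (BV i).SeparatingRight) (hBW : ∀ i, (BW i).SeparatingRight)
    {δ : I → ℂ} (hBWsym : ∀ i (u v : W i), BW i u v = δ i * BW i v u)
    {σ : ∀ i, V i ≃ₗ[ℂ] V i} (hσ : ∀ i a b, BV i a b = BV i b (σ i a))
    (hτ : IsTransposeImage hsrc htgt ε BV BW x p q x' p' q')
    (hτ' : IsTransposeImage hsrc htgt ε BV BW x' p' q' x'' p'' q'') :
    IsSignedConj σ δ x p q x'' p'' q'' := by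
  have hσ_symm : ∀ i a (v : V i), BV i a v = BV i ((σ i).symm v) a := fun i a v => by
    rw [hσ i ((σ i).symm v), LinearEquiv.apply_symm_apply]
  -- on the `δ`-forms of `W`, multiplication by `δ` plays the role of both `σ` and `σ⁻¹`
  have hBW_swap_left : ∀ i (a b : W i), BW i a b = BW i (δ i • b) a := fun i a b => by
    rw [hBWsym, LinearMap.map_smul₂, smul_eq_mul]
  have hBW_swap_right : ∀ i (a b : W i), BW i a b = BW i b (δ i • a) := fun i a b => by
    rw [hBWsym, map_smul, smul_eq_mul]
  refine ⟨fun h v => ?_, fun i w => ?_, fun i v => ?_⟩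
  · rw [apply_eq_smul_of_adjoint_of_adjoint (hBV (tgt h)) (hσ_symm (src h)) (hσ (tgt h))
      (hτ.apply_bar hbar hε h) (hτ'.1 h), neg_mul, ← sq, hε2, neg_one_smul]
  · rw [apply_eq_smul_of_adjoint_of_adjoint (f₀ := p i) (f₂ := p'' i) (c₁ := 1) (c₂ := -1)
      (hBV i) (hBW_swap_left i) (hσ i)
      (fun a u => by rw [one_mul, hτ.2.2]) (fun u v => by rw [hτ'.2.1, neg_one_mul, neg_neg]),
      map_smul, map_smul, smul_smul, one_mul, neg_one_mul]
  · rw [apply_eq_smul_of_adjoint_of_adjoint (f₀ := q i) (f₂ := q'' i) (c₁ := -1) (c₂ := 1)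
      (hBW i) (hσ_symm i) (hBW_swap_right i)
      (fun a u => by rw [hτ.2.1, neg_one_mul, neg_neg]) (fun u v => by rw [hτ'.2.2, one_mul]),
      smul_smul, mul_one, neg_one_mul]

end Transpose

theorem tau_squared_eq_one_of_alternating_and_tau_fourth_eq_one_general
    {I H : Type*}
    (src tgt : H → I) (bar : H → H)
    (hbarbar : ∀ h, bar (bar h) = h)
    (hsrc : ∀ h, src (bar h) = tgt h) (htgt : ∀ h, tgt (bar h) = src h)
    (ε : H → ℂ) (hεsign : ∀ h, ε h = 1 ∨ ε h = -1) (hε : ∀ h, ε h + ε (bar h) = 0)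
    (V W : I → Type*)
    [∀ i, AddCommGroup (V i)] [∀ i, Module ℂ (V i)] [∀ i, FiniteDimensional ℂ (V i)]
    [∀ i, AddCommGroup (W i)] [∀ i, Module ℂ (W i)]
    (BV : ∀ i, V i →ₗ[ℂ] V i →ₗ[ℂ] ℂ) (BW : ∀ i, W i →ₗ[ℂ] W i →ₗ[ℂ] ℂ)
    (hBVl : ∀ i (u : V i), (∀ v, BV i u v = 0) → u = 0)
    (hBVr : ∀ i (v : V i), (∀ u, BV i u v = 0) → v = 0)
    (hBWr : ∀ i (v : W i), (∀ u, BW i u v = 0) → v = 0)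
    (δ : I → ℂ) (hδ : ∀ i, δ i = 1 ∨ δ i = -1)
    (hBWsym : ∀ i (u v : W i), BW i u v = δ i * BW i v u)
    -- a chain of five points of `M(v,w)`, each obtained from the previous one by `τ`
    (x : Fin 5 → ∀ h, V (src h) →ₗ[ℂ] V (tgt h))
    (p : Fin 5 → ∀ i, W i →ₗ[ℂ] V i)
    (q : Fin 5 → ∀ i, V i →ₗ[ℂ] W i)
    (hstep : ∀ k : Fin 4,
      (∀ h (u : V (tgt h)) (v : V (src h)),
        BV (tgt h) u (x k.succ h v)
          = ε h * BV (src h)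
              ((vcast V (htgt h)) (x k.castSucc (bar h) ((vcast V (hsrc h)).symm u))) v)
      ∧ (∀ i (v : V i) (w : W i),
          BW i (q k.castSucc i v) w = - BV i v (p k.succ i w))
      ∧ (∀ i (w : W i) (v : V i),
          BV i (p k.castSucc i w) v = BW i w (q k.succ i v))) :
    ((∀ h, δ (src h) * δ (tgt h) = -1) →
      ∃ g : ∀ i, V i ≃ₗ[ℂ] V i,
        (∀ h, x 2 h = (g (tgt h)).toLinearMap ∘ₗ x 0 h ∘ₗ (g (src h)).symm.toLinearMap)
        ∧ (∀ i, p 2 i = (g i).toLinearMap ∘ₗ p 0 i)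
        ∧ (∀ i, q 2 i = q 0 i ∘ₗ (g i).symm.toLinearMap))
    ∧ (∃ g : ∀ i, V i ≃ₗ[ℂ] V i,
        (∀ h, x 4 h = (g (tgt h)).toLinearMap ∘ₗ x 0 h ∘ₗ (g (src h)).symm.toLinearMap)
        ∧ (∀ i, p 4 i = (g i).toLinearMap ∘ₗ p 0 i)
        ∧ (∀ i, q 4 i = q 0 i ∘ₗ (g i).symm.toLinearMap)) := by
  choose σ hσ using fun i =>
    LinearMap.BilinForm.Nondegenerate.exists_linearEquiv_apply_eq_apply_swap
      (B := BV i) ⟨hBVl i, hBVr i⟩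
  have hε2 : ∀ h, ε h ^ 2 = 1 := fun h => by rcases hεsign h with e | e <;> simp [e]
  have hδ2 : ∀ i, δ i ^ 2 = 1 := fun i => by rcases hδ i with e | e <;> simp [e]
  have h02 : IsSignedConj σ δ (x 0) (p 0) (q 0) (x 2) (p 2) (q 2) :=
    IsTransposeImage.isSignedConj hbarbar hε hε2 hBVr hBWr hBWsym hσ (hstep 0) (hstep 1)
  have h24 : IsSignedConj σ δ (x 2) (p 2) (q 2) (x 4) (p 4) (q 4) :=
    IsTransposeImage.isSignedConj hbarbar hε hε2 hBVr hBWr hBWsym hσ (hstep 2) (hstep 3)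
  exact ⟨fun halt => h02.exists_isGaugeImage_of_alternating hδ2 halt,
    ⟨fun i => (σ i).trans (σ i), h02.isGaugeImage_trans hδ2 h24⟩⟩

/-- Let `Γ` be a graph with vertex set `I`, arrow set `H` (with involution `bar` exchanging
source and target), orientation function `ε` with `ε h + ε (bar h) = 0`, and let `V`, `W` be
`I`-graded formed spaces, the forms on `W i` being `δ i`-forms.  The transpose map `τ` on
`M(v,w)` sends `(x, p, q)` to `(ε(h) x*_{h̄}, -q*, p*)`; below a `τ`-step from the point
indexed `k` to the point indexed `k+1` is recorded by the defining adjoint identities.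
Then: if the sign `δ` is `Γ`-alternating, `τ²(x)` lies in the `G_v`-orbit of `x`
(so `τ² = 1` on the quiver variety), and in general `τ⁴(x)` lies in the `G_v`-orbit of `x`
(so `τ⁴ = 1`). -/
theorem tau_squared_eq_one_of_alternating_and_tau_fourth_eq_one
    {I H : Type*} [Fintype I] [Fintype H] [DecidableEq I]
    (src tgt : H → I) (bar : H → H)
    (hbarbar : ∀ h, bar (bar h) = h)
    (hsrc : ∀ h, src (bar h) = tgt h) (htgt : ∀ h, tgt (bar h) = src h)
    (ε : H → ℂ) (hεsign : ∀ h, ε h = 1 ∨ ε h = -1) (hε : ∀ h, ε h + ε (bar h) = 0)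
    (V W : I → Type*)
    [∀ i, AddCommGroup (V i)] [∀ i, Module ℂ (V i)] [∀ i, FiniteDimensional ℂ (V i)]
    [∀ i, AddCommGroup (W i)] [∀ i, Module ℂ (W i)] [∀ i, FiniteDimensional ℂ (W i)]
    (BV : ∀ i, V i →ₗ[ℂ] V i →ₗ[ℂ] ℂ) (BW : ∀ i, W i →ₗ[ℂ] W i →ₗ[ℂ] ℂ)
    (hBVl : ∀ i (u : V i), (∀ v, BV i u v = 0) → u = 0)
    (hBVr : ∀ i (v : V i), (∀ u, BV i u v = 0) → v = 0)
    (hBWl : ∀ i (u : W i), (∀ v, BW i u v = 0) → u = 0)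
    (hBWr : ∀ i (v : W i), (∀ u, BW i u v = 0) → v = 0)
    (δ : I → ℂ) (hδ : ∀ i, δ i = 1 ∨ δ i = -1)
    (hBWsym : ∀ i (u v : W i), BW i u v = δ i * BW i v u)
    -- a chain of five points of `M(v,w)`, each obtained from the previous one by `τ`
    (x : Fin 5 → ∀ h, V (src h) →ₗ[ℂ] V (tgt h))
    (p : Fin 5 → ∀ i, W i →ₗ[ℂ] V i)
    (q : Fin 5 → ∀ i, V i →ₗ[ℂ] W i)
    (hstep : ∀ k : Fin 4,
      (∀ h (u : V (tgt h)) (v : V (src h)),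
        BV (tgt h) u (x k.succ h v)
          = ε h * BV (src h)
              ((vcast V (htgt h)) (x k.castSucc (bar h) ((vcast V (hsrc h)).symm u))) v)
      ∧ (∀ i (v : V i) (w : W i),
          BW i (q k.castSucc i v) w = - BV i v (p k.succ i w))
      ∧ (∀ i (w : W i) (v : V i),
          BV i (p k.castSucc i w) v = BW i w (q k.succ i v))) :
    ((∀ h, δ (src h) * δ (tgt h) = -1) →
      ∃ g : ∀ i, V i ≃ₗ[ℂ] V i,
        (∀ h, x 2 h = (g (tgt h)).toLinearMap ∘ₗ x 0 h ∘ₗ (g (src h)).symm.toLinearMap)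
        ∧ (∀ i, p 2 i = (g i).toLinearMap ∘ₗ p 0 i)
        ∧ (∀ i, q 2 i = q 0 i ∘ₗ (g i).symm.toLinearMap))
    ∧ (∃ g : ∀ i, V i ≃ₗ[ℂ] V i,
        (∀ h, x 4 h = (g (tgt h)).toLinearMap ∘ₗ x 0 h ∘ₗ (g (src h)).symm.toLinearMap)
        ∧ (∀ i, p 4 i = (g i).toLinearMap ∘ₗ p 0 i)
        ∧ (∀ i, q 4 i = q 0 i ∘ₗ (g i).symm.toLinearMap)) :=
  tau_squared_eq_one_of_alternating_and_tau_fourth_eq_one_general src tgt bar hbarbar hsrc htgt ε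
    hεsign hε V W BV BW hBVl hBVr hBWr δ hδ hBWsym x p q hstep

end
end

section
/- If operators K₁(u), K₂(v) acting on a tensor product F₁ ⊗ F₂ ⊗ F₃ (acting on the first, resp. second factor, tensored with identity elsewhere) and R-matrices R_{ij}(z) satisfy: (a) the reflection equation R₁₂(u-v) K₁(u) R₁₂(u+v) K₂(v) = K₂(v) R₁₂(u+v) K₁(u) R₁₂(u-v); (b) the modified Yang–Baxter equation R₁₃(u-w) R₁₂(u+v) R₂₃(v-w) = R₂₃(v-w) R₁₂(u+v) R₁₃(u-w) and the usual Yang-Baxter-type commutation allowing reordering; and (c) K_i(a) commutes with R_{jk}(z) whenever i ∉ {j,k}; then the dressed operators S₁(u) = R₁₃(u-w) K₁(u) R₁₃(u-w) and S₂(v) = R₂₃(v-w) K₂(v) R₂₃(v-w) also satisfy the reflection equation: R₁₂(u-v) S₁(u) R₁₂(u+v) S₂(v) = S₂(v) R₁₂(u+v) S₁(u) R₁₂(u-v). -/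
/-! The two Yang–Baxter relations and the locality of `K₁`, `K₂` let the dressing factors
`s = R₁₃(u-w)`, `t = R₂₃(v-w)` be moved aside until the undressed reflection equation appears in
the middle of the word; applying it and moving them back yields the dressed one. -/

theorem reflection_equation_dress {M : Type*} [Monoid M] {r r' s t k₁ k₂ : M}
    (hrefl : r * k₁ * r' * k₂ = k₂ * r' * k₁ * r)
    (hmYBE : s * r' * t = t * r' * s) (hYBE : r * s * t = t * s * r)
    (hk₁ : Commute k₁ t) (hk₂ : Commute k₂ s) :
    r * (s * k₁ * s) * r' * (t * k₂ * t) = t * k₂ * t * r' * (s * k₁ * s) * r :=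
  calc r * (s * k₁ * s) * r' * (t * k₂ * t)
    _ = r * s * k₁ * (s * r' * t) * k₂ * t := by simp only [mul_assoc]
    _ = r * s * (k₁ * t) * r' * (s * k₂) * t := by rw [hmYBE]; simp only [mul_assoc]
    _ = (r * s * t) * (k₁ * r' * k₂) * s * t := by rw [hk₁.eq, ← hk₂.eq]; simp only [mul_assoc]
    _ = t * s * (r * k₁ * r' * k₂) * s * t := by rw [hYBE]; simp only [mul_assoc]
    _ = t * (s * k₂) * r' * k₁ * (r * s * t) := by rw [hrefl]; simp only [mul_assoc]
    _ = t * k₂ * s * r' * (k₁ * t) * s * r := by rw [hYBE, ← hk₂.eq]; simp only [mul_assoc]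
    _ = t * k₂ * (s * r' * t) * k₁ * s * r := by rw [hk₁.eq]; simp only [mul_assoc]
    _ = t * k₂ * t * r' * (s * k₁ * s) * r := by rw [hmYBE]; simp only [mul_assoc]

/-- If `K₁, K₂` and R-matrices `R₁₂, R₁₃, R₂₃` satisfy (a) the reflection equation,
(b) the modified Yang–Baxter equation and the Yang–Baxter equation, and (c) `K_i` commutes
with `R_{jk}` for `i ∉ {j,k}`, then the dressed operators
`S₁(u) = R₁₃(u-w) K₁(u) R₁₃(u-w)` and `S₂(v) = R₂₃(v-w) K₂(v) R₂₃(v-w)` also satisfy the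
reflection equation. -/
theorem dressed_reflection_equation
    {M : Type*} [Monoid M] {A : Type*} [AddCommGroup A]
    (K₁ K₂ R₁₂ R₁₃ R₂₃ : A → M)
    (hrefl : ∀ u v, R₁₂ (u - v) * K₁ u * R₁₂ (u + v) * K₂ v
        = K₂ v * R₁₂ (u + v) * K₁ u * R₁₂ (u - v))
    (hmYBE : ∀ u v w, R₁₃ (u - w) * R₁₂ (u + v) * R₂₃ (v - w)
        = R₂₃ (v - w) * R₁₂ (u + v) * R₁₃ (u - w))
    (hYBE : ∀ u v w, R₁₂ (u - v) * R₁₃ (u - w) * R₂₃ (v - w)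
        = R₂₃ (v - w) * R₁₃ (u - w) * R₁₂ (u - v))
    (hK₁R₂₃ : ∀ a b, K₁ a * R₂₃ b = R₂₃ b * K₁ a)
    (hK₂R₁₃ : ∀ a b, K₂ a * R₁₃ b = R₁₃ b * K₂ a) :
    ∀ u v w,
      R₁₂ (u - v) * (R₁₃ (u - w) * K₁ u * R₁₃ (u - w)) * R₁₂ (u + v)
          * (R₂₃ (v - w) * K₂ v * R₂₃ (v - w))
        = (R₂₃ (v - w) * K₂ v * R₂₃ (v - w)) * R₁₂ (u + v)
          * (R₁₃ (u - w) * K₁ u * R₁₃ (u - w)) * R₁₂ (u - v) := fun u v w =>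
  reflection_equation_dress (hrefl u v) (hmYBE u v w) (hYBE u v w)
    (hK₁R₂₃ u (v - w)) (hK₂R₁₃ v (u - w))
end
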